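/- For every k ≥ 2, the set of bimatrix games of size (k)×(k) having exactly k Nash equilibria is not open: there exists a bimatrix game G with exactly k Nash equilibria such that every neighborhood of G (within games of the same size) contains a game having strictly more than k Nash equilibria. In particular, for k = 3 a witness is the 3×3 game with payoffs (row, column) given by [[(0,0),(−1,−1),(−1,0)],[(−1,−1),(0,0),(−1,0)],[(0,−1),(0,−1),(0,0)]], whose only Nash equilibria are the three pure diagonal profiles, while for every sufficiently small ε > 0 the game obtained by replacing the payoffs of the middle diagonal cell by (ε,ε) has at least four Nash equilibria. -/

import Mathlib

/-- A bimatrix game of size `k × k`: the pair of payoff matrices (row player, column player).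
The space of such games carries the (product, i.e. Euclidean) topology. -/
abbrev BiGame (k : ℕ) : Type := (Fin k → Fin k → ℝ) × (Fin k → Fin k → ℝ)

/-- The Dirac (pure) mixed strategy concentrated on `a`. -/
def pureStrat {k : ℕ} (a : Fin k) : Fin k → ℝ := fun b => if b = a then 1 else 0

/-- A mixed strategy: a probability distribution on the strategy set. -/
def IsMixed {k : ℕ} (x : Fin k → ℝ) : Prop := (∀ a, 0 ≤ x a) ∧ ∑ a, x a = 1

/-- Bilinear extension of a payoff matrix to mixed strategies. -/
def pay {k : ℕ} (U : Fin k → Fin k → ℝ) (x y : Fin k → ℝ) : ℝ :=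
  ∑ a, ∑ b, x a * y b * U a b

/-- Nash equilibrium of a bimatrix game: a pair of mixed strategies such that no player can
gain by a unilateral pure deviation. -/
def IsNash2 {k : ℕ} (G : BiGame k) (σ : (Fin k → ℝ) × (Fin k → ℝ)) : Prop :=
  IsMixed σ.1 ∧ IsMixed σ.2 ∧
    (∀ a, pay G.1 (pureStrat a) σ.2 ≤ pay G.1 σ.1 σ.2) ∧
    (∀ b, pay G.2 σ.1 (pureStrat b) ≤ pay G.2 σ.1 σ.2)

/-- The witness `3 × 3` game, with the middle diagonal cell's payoffs replaced by `(ε, ε)`;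
the payoffs (row, column) of the game are
`[[(0,0),(−1,−1),(−1,0)],[(−1,−1),(ε,ε),(−1,0)],[(0,−1),(0,−1),(0,0)]]`. -/
noncomputable def G3e (ε : ℝ) : BiGame 3 :=
  (![![0, -1, -1], ![-1, ε, -1], ![0, 0, 0]],
   ![![0, -1, 0], ![-1, ε, 0], ![-1, -1, 0]])

/-- `G` has exactly `j` Nash equilibria. -/
def HasExactlyNash {k : ℕ} (G : BiGame k) (j : ℕ) : Prop :=
  ∃ E : Finset ((Fin k → ℝ) × (Fin k → ℝ)), E.card = j ∧ ∀ σ, σ ∈ E ↔ IsNash2 G σ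

open Finset
section aux
variable {k : ℕ}

variable {k : ℕ}

lemma pay_pureL (U : Fin k → Fin k → ℝ) (a : Fin k) (y : Fin k → ℝ) :
    pay U (pureStrat a) y = ∑ b, y b * U a b := by
  unfold pay pureStrat
  rw [Finset.sum_eq_single a]
  · simp
  · intro b _ hb; simp [hb]
  · simp

lemma pay_pureR (U : Fin k → Fin k → ℝ) (x : Fin k → ℝ) (b : Fin k) :
    pay U x (pureStrat b) = ∑ a, x a * U a b := by
  unfold pay pureStrat
  refine Finset.sum_congr rfl fun a _ => ?_
  rw [Finset.sum_eq_single b] <;> simp +contextual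

lemma pay_pure_pure (U : Fin k → Fin k → ℝ) (a b : Fin k) :
    pay U (pureStrat a) (pureStrat b) = U a b := by
  rw [pay_pureL]
  unfold pureStrat
  rw [Finset.sum_eq_single b] <;> simp +contextual

lemma pay_eq_sum (U : Fin k → Fin k → ℝ) (x y : Fin k → ℝ) :
    pay U x y = ∑ a, x a * pay U (pureStrat a) y := by
  rw [pay]
  refine Finset.sum_congr rfl fun a _ => ?_
  rw [pay_pureL, Finset.mul_sum]
  refine Finset.sum_congr rfl fun b _ => by ring

lemma pay_swap (M : Fin k → Fin k → ℝ) (x y : Fin k → ℝ) :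
    pay (fun a b => M b a) x y = pay M y x := by
  unfold pay; rw [Finset.sum_comm]
  exact Finset.sum_congr rfl fun b _ => Finset.sum_congr rfl fun a _ => by ring

lemma isMixed_pure (a : Fin k) : IsMixed (pureStrat a) := by
  constructor
  · intro b; unfold pureStrat; split <;> norm_num
  · simp [pureStrat]

lemma eq_pure_of_one {x : Fin k → ℝ} (hx : IsMixed x) {a : Fin k} (h : x a = 1) :
    x = pureStrat a := by
  obtain ⟨h0, h1⟩ := hx
  have h2 := Finset.add_sum_erase univ x (mem_univ a)
  rw [h1, h] at h2
  have hz : ∑ b ∈ univ.erase a, x b = 0 := by linarith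
  funext b
  by_cases hb : b = a
  · subst hb; simp [pureStrat, h]
  · have : x b = 0 :=
      (Finset.sum_eq_zero_iff_of_nonneg (fun i _ => h0 i)).mp hz b (by simp [hb])
    simp [pureStrat, hb, this]

lemma eq_pure_of_zeros {x : Fin k → ℝ} (hx : IsMixed x) {a : Fin k} (h : ∀ b, b ≠ a → x b = 0) :
    x = pureStrat a := by
  have : x a = 1 := by
    have h2 := hx.2
    rwa [Finset.sum_eq_single a (fun b _ hb => h b hb) (by simp)] at h2
  exact eq_pure_of_one hx this

end aux

open Finset
noncomputable def Gk (k : ℕ) (ε : ℝ) (c : Fin k) : BiGame k :=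
  (fun a b => if a.val = k - 1 then 0 else if a = b then (if a = c then ε else 0) else -1,
   fun a b => if b.val = k - 1 then 0 else if a = b then (if a = c then ε else 0) else -1)

lemma Gk_snd (k : ℕ) (ε : ℝ) (c : Fin k) :
    (Gk k ε c).2 = fun a b => (Gk k ε c).1 b a := by
  funext a b
  unfold Gk
  dsimp only
  rcases eq_or_ne a b with rfl | h
  · rfl
  · by_cases hb : b.val = k - 1
    · simp [hb]
    · rw [if_neg hb, if_neg hb, if_neg h, if_neg (Ne.symm h)]

lemma pay1_pure (k : ℕ) (ε : ℝ) (c : Fin k) (a : Fin k) (y : Fin k → ℝ)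
    (hy : ∑ b, y b = 1) :
    pay (Gk k ε c).1 (pureStrat a) y =
      if a.val = k - 1 then 0 else y a * ((if a = c then ε else 0) + 1) - 1 := by
  rw [pay_pureL]
  by_cases ha : a.val = k - 1
  · simp [Gk, ha]
  · rw [if_neg ha]
    have key : ∀ b, y b * (Gk k ε c).1 a b
        = (if b = a then y b * ((if a = c then ε else 0) + 1) else 0) - y b := by
      intro b
      unfold Gk; dsimp only
      rw [if_neg ha]
      rcases eq_or_ne b a with rfl | hb
      · rw [if_pos rfl, if_pos rfl]; ring
      · rw [if_neg (Ne.symm hb), if_neg hb]; ring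
    rw [Finset.sum_congr rfl fun b _ => key b, Finset.sum_sub_distrib, hy,
        Finset.sum_ite_eq' univ a]
    simp


lemma pay2 (k : ℕ) (ε : ℝ) (c : Fin k) (x y : Fin k → ℝ) :
    pay (Gk k ε c).2 x y = pay (Gk k ε c).1 y x := by
  rw [Gk_snd, pay_swap]

lemma le_one_of_mixed {k : ℕ} {y : Fin k → ℝ} (hy : IsMixed y) (b : Fin k) : y b ≤ 1 := by
  have h := Finset.single_le_sum (f := y) (fun i _ => hy.1 i) (mem_univ b)
  rw [hy.2] at h; exact h

lemma key_zero {k : ℕ} (hk : 2 ≤ k) (c : Fin k) {x y : Fin k → ℝ}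
    (hx : IsMixed x) (hy : IsMixed y)
    (hR : ∀ a, pay (Gk k 0 c).1 (pureStrat a) y ≤ pay (Gk k 0 c).1 x y) :
    ∀ a : Fin k, a.val ≠ k - 1 → x a = 0 ∨ y a = 1 := by
  set l : Fin k := ⟨k - 1, by omega⟩ with hl
  have hp : ∀ a : Fin k, a.val ≠ k - 1 →
      pay (Gk k 0 c).1 (pureStrat a) y = y a - 1 := by
    intro a ha
    rw [pay1_pure k 0 c a y hy.2, if_neg ha]
    split_ifs <;> ring
  have hpl : pay (Gk k 0 c).1 (pureStrat l) y = 0 := by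
    rw [pay1_pure k 0 c l y hy.2, if_pos rfl]
  have hV0 : 0 ≤ pay (Gk k 0 c).1 x y := by have := hR l; rwa [hpl] at this
  have hterm : ∀ a ∈ univ, x a * pay (Gk k 0 c).1 (pureStrat a) y ≤ 0 := by
    intro a _
    by_cases ha : a.val = k - 1
    · have hal : a = l := Fin.ext ha
      rw [hal, hpl, mul_zero]
    · rw [hp a ha]
      nlinarith [hx.1 a, le_one_of_mixed hy a]
  have hVsum := pay_eq_sum (Gk k 0 c).1 x y
  have hV : pay (Gk k 0 c).1 x y = 0 :=
    le_antisymm (hVsum ▸ Finset.sum_nonpos hterm) hV0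
  intro a ha
  have hz := (Finset.sum_eq_zero_iff_of_nonpos hterm).mp (by rw [← hVsum, hV]) a (mem_univ a)
  rw [hp a ha] at hz
  rcases mul_eq_zero.mp hz with h | h
  · exact Or.inl h
  · exact Or.inr (by linarith)

lemma nash_Gk_zero {k : ℕ} (hk : 2 ≤ k) (c : Fin k) {σ : (Fin k → ℝ) × (Fin k → ℝ)}
    (h : IsMixed σ.1 ∧ IsMixed σ.2 ∧
      (∀ a, pay (Gk k 0 c).1 (pureStrat a) σ.2 ≤ pay (Gk k 0 c).1 σ.1 σ.2) ∧
      (∀ b, pay (Gk k 0 c).2 σ.1 (pureStrat b) ≤ pay (Gk k 0 c).2 σ.1 σ.2)) :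
    ∃ a, σ = (pureStrat a, pureStrat a) := by
  obtain ⟨x, y⟩ := σ
  obtain ⟨hx, hy, hR, hC⟩ := h
  dsimp only at hx hy hR hC
  have hC' : ∀ b, pay (Gk k 0 c).1 (pureStrat b) x ≤ pay (Gk k 0 c).1 y x := by
    intro b
    have := hC b
    rwa [pay2, pay2] at this
  have hrow := key_zero hk c hx hy hR
  have hcol := key_zero hk c hy hx hC'
  try dsimp only at hrow hcol
  set l : Fin k := ⟨k - 1, by omega⟩ with hl
  by_cases hcase : ∀ a : Fin k, a.val ≠ k - 1 → x a = 0
  · refine ⟨l, ?_⟩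
    have hxl : x = pureStrat l := by
      refine eq_pure_of_zeros hx fun b hb => hcase b ?_
      intro hbv; exact hb (Fin.ext hbv)
    have hyl : y = pureStrat l := by
      refine eq_pure_of_zeros hy fun b hb => ?_
      have hbv : b.val ≠ k - 1 := fun hbv => hb (Fin.ext hbv)
      rcases hcol b hbv with h | h
      · exact h
      · exact absurd h (by rw [hcase b hbv]; norm_num)
    rw [hxl, hyl]
  · push_neg at hcase
    obtain ⟨a, ha, hxa⟩ := hcase
    have hya : y a = 1 := (hrow a ha).resolve_left hxa
    have hxa1 : x a = 1 := by
      rcases hcol a ha with h | h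
      · exact absurd h (by rw [hya]; norm_num)
      · exact h
    exact ⟨a, by rw [Prod.mk.injEq]; exact ⟨eq_pure_of_one hx hxa1, eq_pure_of_one hy hya⟩⟩


lemma pure_nash_Gk {k : ℕ} (ε : ℝ) (hε : 0 ≤ ε) (c a : Fin k) :
    IsMixed (pureStrat a) ∧ IsMixed (pureStrat a) ∧
      (∀ a', pay (Gk k ε c).1 (pureStrat a') (pureStrat a) ≤
        pay (Gk k ε c).1 (pureStrat a) (pureStrat a)) ∧
      (∀ b, pay (Gk k ε c).2 (pureStrat a) (pureStrat b) ≤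
        pay (Gk k ε c).2 (pureStrat a) (pureStrat a)) := by
  have hdiag : 0 ≤ (Gk k ε c).1 a a := by
    unfold Gk; dsimp only
    split_ifs with h1 h2 h3
    · norm_num
    · exact hε
    · norm_num
    · exact absurd rfl h2
  have hoff : ∀ a', a' ≠ a → (Gk k ε c).1 a' a ≤ 0 := by
    intro a' h
    unfold Gk; dsimp only
    split_ifs <;> first | norm_num | exact absurd ‹a' = a› h
  have hmain : ∀ a', (Gk k ε c).1 a' a ≤ (Gk k ε c).1 a a := by
    intro a'
    rcases eq_or_ne a' a with rfl | h
    · exact le_refl _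
    · linarith [hoff a' h]
  refine ⟨isMixed_pure a, isMixed_pure a, ?_, ?_⟩
  · intro a'; rw [pay_pure_pure, pay_pure_pure]; exact hmain a'
  · intro b; rw [pay2, pay2, pay_pure_pure, pay_pure_pure]; exact hmain b

noncomputable def zmix (k : ℕ) (ε : ℝ) (c : Fin k) : Fin k → ℝ :=
  fun b => (if b = c then 1/(1+ε) else 0) + (if b.val = k - 1 then ε/(1+ε) else 0)

lemma zmix_mixed {k : ℕ} (hk : 2 ≤ k) {ε : ℝ} (hε : 0 < ε) {c : Fin k}
    (hc : c.val ≠ k - 1) : IsMixed (zmix k ε c) := by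
  have h1 : (0:ℝ) < 1 + ε := by linarith
  constructor
  · intro b
    unfold zmix
    have hA : (0:ℝ) ≤ 1/(1+ε) := by positivity
    have hB : (0:ℝ) ≤ ε/(1+ε) := by positivity
    split_ifs <;> linarith
  · set l : Fin k := ⟨k - 1, by omega⟩ with hl
    have hiff : ∀ b : Fin k, (b.val = k - 1) ↔ b = l :=
      fun b => ⟨fun h => Fin.ext h, fun h => by rw [h]⟩
    unfold zmix
    simp only [hiff]
    rw [Finset.sum_add_distrib, Finset.sum_ite_eq' univ c, Finset.sum_ite_eq' univ l]
    simp only [mem_univ, if_pos]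
    field_simp

lemma zmix_apply_c {k : ℕ} {ε : ℝ} {c : Fin k} (hc : c.val ≠ k - 1) :
    zmix k ε c c = 1/(1+ε) := by
  unfold zmix; rw [if_pos rfl, if_neg hc, add_zero]

lemma zmix_apply_other {k : ℕ} {ε : ℝ} {c b : Fin k} (hb : b ≠ c) (hb2 : b.val ≠ k - 1) :
    zmix k ε c b = 0 := by
  unfold zmix; rw [if_neg hb, if_neg hb2, add_zero]

lemma pay1_pure_zmix {k : ℕ} (hk : 2 ≤ k) {ε : ℝ} (hε : 0 < ε) {c : Fin k}
    (hc : c.val ≠ k - 1) (a : Fin k) :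
    pay (Gk k ε c).1 (pureStrat a) (zmix k ε c) =
      if a.val = k - 1 ∨ a = c then 0 else -1 := by
  have h1 : (0:ℝ) < 1 + ε := by linarith
  rw [pay1_pure k ε c a _ (zmix_mixed hk hε hc).2]
  by_cases ha : a.val = k - 1
  · rw [if_pos ha, if_pos (Or.inl ha)]
  · rw [if_neg ha]
    rcases eq_or_ne a c with rfl | hac
    · rw [if_pos rfl, if_pos (Or.inr rfl), zmix_apply_c hc]
      field_simp
      ring
    · rw [if_neg hac, if_neg (by tauto), zmix_apply_other hac ha]
      ring

lemma zmix_nash {k : ℕ} (hk : 2 ≤ k) {ε : ℝ} (hε : 0 < ε) {c : Fin k}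
    (hc : c.val ≠ k - 1) :
    IsMixed (zmix k ε c) ∧ IsMixed (zmix k ε c) ∧
      (∀ a, pay (Gk k ε c).1 (pureStrat a) (zmix k ε c) ≤
        pay (Gk k ε c).1 (zmix k ε c) (zmix k ε c)) ∧
      (∀ b, pay (Gk k ε c).2 (zmix k ε c) (pureStrat b) ≤
        pay (Gk k ε c).2 (zmix k ε c) (zmix k ε c)) := by
  have hm := zmix_mixed hk hε hc
  have hV : pay (Gk k ε c).1 (zmix k ε c) (zmix k ε c) = 0 := by
    rw [pay_eq_sum]
    refine Finset.sum_eq_zero fun a _ => ?_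
    rw [pay1_pure_zmix hk hε hc a]
    by_cases h : a.val = k - 1 ∨ a = c
    · rw [if_pos h, mul_zero]
    · push_neg at h
      rw [zmix_apply_other h.2 h.1, zero_mul]
  have hdev : ∀ a, pay (Gk k ε c).1 (pureStrat a) (zmix k ε c) ≤ 0 := by
    intro a
    rw [pay1_pure_zmix hk hε hc a]
    split_ifs <;> norm_num
  refine ⟨hm, hm, ?_, ?_⟩
  · intro a; rw [hV]; exact hdev a
  · intro b; rw [pay2, pay2, hV]; exact hdev b

lemma pure_pair_inj {k : ℕ} :
    Function.Injective fun a : Fin k => (pureStrat a, pureStrat a) := by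
  intro a a' h
  have h1 : pureStrat a = pureStrat a' := congrArg Prod.fst h
  have h2 := congrFun h1 a
  by_contra hne
  simp only [pureStrat, if_pos rfl, if_neg hne] at h2
  norm_num at h2

noncomputable def pureE (k : ℕ) : Finset ((Fin k → ℝ) × (Fin k → ℝ)) :=
  univ.image fun a => (pureStrat a, pureStrat a)

lemma pureE_card (k : ℕ) : (pureE k).card = k := by
  rw [pureE, Finset.card_image_of_injective _ pure_pair_inj, card_univ, Fintype.card_fin]

lemma mem_pureE {k : ℕ} {σ : (Fin k → ℝ) × (Fin k → ℝ)} :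
    σ ∈ pureE k ↔ ∃ a, σ = (pureStrat a, pureStrat a) := by
  simp [pureE, eq_comm]

lemma zmix_not_mem {k : ℕ} (hk : 2 ≤ k) {ε : ℝ} (hε : 0 < ε) {c : Fin k}
    (hc : c.val ≠ k - 1) : (zmix k ε c, zmix k ε c) ∉ pureE k := by
  rw [mem_pureE]
  rintro ⟨a, ha⟩
  have h1 : zmix k ε c = pureStrat a := congrArg Prod.fst ha
  have h2 := congrFun h1 c
  rw [zmix_apply_c hc] at h2
  have h3 : (0:ℝ) < 1 + ε := by linarith
  unfold pureStrat at h2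
  split_ifs at h2
  · rw [div_eq_one_iff_eq (by linarith)] at h2; linarith
  · rw [div_eq_zero_iff] at h2
    rcases h2 with h | h <;> linarith

lemma Gk_continuous (k : ℕ) (c : Fin k) : Continuous fun ε : ℝ => Gk k ε c := by
  unfold Gk
  refine Continuous.prodMk ?_ ?_ <;>
    · apply continuous_pi; intro a; apply continuous_pi; intro b
      split_ifs <;> first | exact continuous_const | exact continuous_id


lemma isNash2_pure_Gk {k : ℕ} (ε : ℝ) (hε : 0 ≤ ε) (c a : Fin k) :
    IsNash2 (Gk k ε c) (pureStrat a, pureStrat a) := pure_nash_Gk ε hε c a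

lemma isNash2_zmix_Gk {k : ℕ} (hk : 2 ≤ k) {ε : ℝ} (hε : 0 < ε) {c : Fin k}
    (hc : c.val ≠ k - 1) : IsNash2 (Gk k ε c) (zmix k ε c, zmix k ε c) :=
  zmix_nash hk hε hc

lemma hasExactly_Gk {k : ℕ} (hk : 2 ≤ k) (c : Fin k) : HasExactlyNash (Gk k 0 c) k := by
  refine ⟨pureE k, pureE_card k, fun σ => ?_⟩
  rw [mem_pureE]
  constructor
  · rintro ⟨a, rfl⟩; exact isNash2_pure_Gk 0 le_rfl c a
  · intro h; exact nash_Gk_zero hk c h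

lemma bigE_spec {k : ℕ} (hk : 2 ≤ k) {ε : ℝ} (hε : 0 < ε) {c : Fin k}
    (hc : c.val ≠ k - 1) :
    ∃ E : Finset ((Fin k → ℝ) × (Fin k → ℝ)),
      E.card = k + 1 ∧ ∀ σ ∈ E, IsNash2 (Gk k ε c) σ := by
  refine ⟨insert (zmix k ε c, zmix k ε c) (pureE k), ?_, ?_⟩
  · rw [Finset.card_insert_of_notMem (zmix_not_mem hk hε hc), pureE_card]
  · intro σ hσ
    rcases Finset.mem_insert.mp hσ with rfl | hσ
    · exact isNash2_zmix_Gk hk hε hc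
    · obtain ⟨a, rfl⟩ := mem_pureE.mp hσ
      exact isNash2_pure_Gk ε hε.le c a

lemma G3e_eq (ε : ℝ) : G3e ε = Gk 3 ε 1 := by
  unfold G3e Gk
  refine Prod.ext ?_ ?_ <;>
    · funext a b
      fin_cases a <;> fin_cases b <;> norm_num [Fin.ext_iff]

/-- for every `k ≥ 2`, the set of `k × k` bimatrix games with exactly `k` Nash
equilibria is not open: some game `G` with exactly `k` Nash equilibria has, in each of its
neighborhoods, a game with strictly more than `k` Nash equilibria. In particular, for `k = 3`,
the game `G3e 0` has exactly the three pure diagonal profiles as Nash equilibria, while for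
every sufficiently small `ε > 0` the game `G3e ε` has at least four Nash equilibria. -/
theorem statement10 :
    (∀ k : ℕ, 2 ≤ k → ∃ G : BiGame k, HasExactlyNash G k ∧
      ∀ U ∈ nhds G, ∃ G' ∈ U, ∃ E : Finset ((Fin k → ℝ) × (Fin k → ℝ)),
        k < E.card ∧ ∀ σ ∈ E, IsNash2 G' σ) ∧
    (∀ σ : (Fin 3 → ℝ) × (Fin 3 → ℝ), IsNash2 (G3e 0) σ ↔
      σ = (pureStrat 0, pureStrat 0) ∨ σ = (pureStrat 1, pureStrat 1) ∨
      σ = (pureStrat 2, pureStrat 2)) ∧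
    (∃ δ : ℝ, 0 < δ ∧ ∀ ε : ℝ, 0 < ε → ε < δ →
      ∃ E : Finset ((Fin 3 → ℝ) × (Fin 3 → ℝ)), 4 ≤ E.card ∧ ∀ σ ∈ E, IsNash2 (G3e ε) σ) := by
  refine ⟨?_, ?_, ?_⟩
  · intro k hk
    have hc : ((⟨0, by omega⟩ : Fin k)).val ≠ k - 1 := by simp; omega
    set c : Fin k := ⟨0, by omega⟩
    refine ⟨Gk k 0 c, hasExactly_Gk hk c, ?_⟩
    intro U hU
    have ht : Filter.Tendsto (fun ε : ℝ => Gk k ε c)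
        (nhdsWithin (0:ℝ) (Set.Ioi 0)) (nhds (Gk k 0 c)) :=
      (((Gk_continuous k c).tendsto 0).mono_left nhdsWithin_le_nhds)
    have h1 : ∀ᶠ ε in nhdsWithin (0:ℝ) (Set.Ioi 0), Gk k ε c ∈ U := ht hU
    have h2 : ∀ᶠ ε in nhdsWithin (0:ℝ) (Set.Ioi 0), ε ∈ Set.Ioi (0:ℝ) :=
      self_mem_nhdsWithin
    obtain ⟨ε, hεU, hε⟩ := (h1.and h2).exists
    obtain ⟨E, hEcard, hE⟩ := bigE_spec hk hε hc
    exact ⟨Gk k ε c, hεU, E, by omega, hE⟩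
  · intro σ
    rw [G3e_eq]
    constructor
    · intro h
      obtain ⟨a, rfl⟩ := nash_Gk_zero (by norm_num) 1 h
      fin_cases a
      · exact Or.inl rfl
      · exact Or.inr (Or.inl rfl)
      · exact Or.inr (Or.inr rfl)
    · have hnash : ∀ a : Fin 3, IsNash2 (Gk 3 0 1) (pureStrat a, pureStrat a) :=
        fun a => isNash2_pure_Gk 0 le_rfl 1 a
      rintro (rfl | rfl | rfl)
      · exact hnash 0
      · exact hnash 1
      · exact hnash 2
  · refine ⟨1, one_pos, fun ε hε _ => ?_⟩
    have hc : ((1 : Fin 3)).val ≠ 3 - 1 := by norm_num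
    obtain ⟨E, hEcard, hE⟩ := bigE_spec (by norm_num) hε hc
    refine ⟨E, by omega, ?_⟩
    rw [G3e_eq]
    exact hE
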